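/- arXiv:math/0311154 — 2 statements merged into one kernel-verified Lean document; each statement's English description precedes it below -/
import Mathlib

section
/- Let (Γ ⇉ M, ω + Ω) be an integral exact pre-quasi-symplectic groupoid with prequantization (R → Γ ⇉ M, θ + B). Suppose C' ∈ Z₂((R ×_M X)_•, ℤ) satisfies J_*(C') = kZ + δD' for some k ∈ ℤ and D' ∈ C₃(R_•, ℤ), where Z = f_{m*}(C_{S¹}) is the 1-cycle given by pushing forward the fundamental 1-cycle of S¹ along the homomorphism f_m(λ) = λ·1_m from S¹ ⇉ pt to R ⇉ M. Set C = π_*(C') and D = π_*(D'). Then ∫_C ω_X − ∫_D (ω + Ω) = k + ∫_{C'} (ω_X − J*(θ + B)). -/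
/-!
Abstract framework for the prequantization of pre-quasi-symplectic groupoids
and their pre-Hamiltonian spaces (following Laurent-Gengoux–Xu).

Smooth manifolds are abstracted as types, smooth maps as functions.  A
`DiffCtxCore` provides, for every such "space", abelian groups of differential
forms and of (piecewise smooth singular) chains, together with the exterior
derivative, pull-back, push-forward, singular boundary and the integration
pairing; `DiffCtxLaws` records the expected equational laws.
-/

noncomputable section

set_option autoImplicit false
set_option maxHeartbeats 1000000

/-- Abstract differential-geometric context: `Form X k` plays the role of the
smooth `k`-forms `Ω^k(X)` and `Chain X k` the role of the group of piecewise
smooth singular `k`-chains `C_k(X, ℤ)` (with real coefficients allowed in the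
pairing).  `circleCycle` is the fundamental `1`-cycle `C_{S¹}` of the circle
and `circleForm` the normalized Maurer–Cartan form `dt/2π` on `S¹`. -/
structure DiffCtxCore where
  Form : Type → ℕ → Type
  formGroup : ∀ X k, AddCommGroup (Form X k)
  pull : ∀ {X Y : Type}, (X → Y) → ∀ {k : ℕ}, Form Y k → Form X k
  d : ∀ {X : Type} {k : ℕ}, Form X k → Form X (k + 1)
  Chain : Type → ℕ → Type
  chainGroup : ∀ X k, AddCommGroup (Chain X k)
  push : ∀ {X Y : Type}, (X → Y) → ∀ {k : ℕ}, Chain X k → Chain Y k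
  bd : ∀ {X : Type} {k : ℕ}, Chain X (k + 1) → Chain X k
  pair : ∀ {X : Type} {k : ℕ}, Chain X k → Form X k → ℝ
  circleCycle : Chain Circle 1
  circleForm : Form Circle 1

instance (C : DiffCtxCore) (X : Type) (k : ℕ) : AddCommGroup (C.Form X k) :=
  C.formGroup X k

instance (C : DiffCtxCore) (X : Type) (k : ℕ) : AddCommGroup (C.Chain X k) :=
  C.chainGroup X k

/-- The laws satisfied by the smooth world: functoriality and additivity of
pull-back/push-forward, `d ∘ d = 0`, Stokes' formula for the pairing, the
change-of-variables formula, and the normalization `∫_{S¹} dt/2π = 1`. -/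
structure DiffCtxLaws (C : DiffCtxCore) : Prop where
  pull_add : ∀ {X Y : Type} (f : X → Y) {k : ℕ} (a b : C.Form Y k),
    C.pull f (a + b) = C.pull f a + C.pull f b
  pull_id : ∀ {X : Type} {k : ℕ} (a : C.Form X k), C.pull (fun x => x) a = a
  pull_comp : ∀ {X Y Z : Type} (f : X → Y) (g : Y → Z) {k : ℕ} (a : C.Form Z k),
    C.pull (fun x => g (f x)) a = C.pull f (C.pull g a)
  d_add : ∀ {X : Type} {k : ℕ} (a b : C.Form X k), C.d (a + b) = C.d a + C.d b
  d_d : ∀ {X : Type} {k : ℕ} (a : C.Form X k), C.d (C.d a) = 0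
  pull_d : ∀ {X Y : Type} (f : X → Y) {k : ℕ} (a : C.Form Y k),
    C.pull f (C.d a) = C.d (C.pull f a)
  push_add : ∀ {X Y : Type} (f : X → Y) {k : ℕ} (a b : C.Chain X k),
    C.push f (a + b) = C.push f a + C.push f b
  push_id : ∀ {X : Type} {k : ℕ} (a : C.Chain X k), C.push (fun x => x) a = a
  push_comp : ∀ {X Y Z : Type} (f : X → Y) (g : Y → Z) {k : ℕ} (a : C.Chain X k),
    C.push (fun x => g (f x)) a = C.push g (C.push f a)
  bd_add : ∀ {X : Type} {k : ℕ} (a b : C.Chain X (k + 1)), C.bd (a + b) = C.bd a + C.bd b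
  bd_bd : ∀ {X : Type} {k : ℕ} (a : C.Chain X (k + 2)), C.bd (C.bd a) = 0
  push_bd : ∀ {X Y : Type} (f : X → Y) {k : ℕ} (a : C.Chain X (k + 1)),
    C.push f (C.bd a) = C.bd (C.push f a)
  pair_add_left : ∀ {X : Type} {k : ℕ} (a b : C.Chain X k) (w : C.Form X k),
    C.pair (a + b) w = C.pair a w + C.pair b w
  pair_add_right : ∀ {X : Type} {k : ℕ} (a : C.Chain X k) (w v : C.Form X k),
    C.pair a (w + v) = C.pair a w + C.pair a v
  pair_zsmul : ∀ {X : Type} {k : ℕ} (n : ℤ) (a : C.Chain X k) (w : C.Form X k),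
    C.pair (n • a) w = n * C.pair a w
  pair_push : ∀ {X Y : Type} (f : X → Y) {k : ℕ} (a : C.Chain X k) (w : C.Form Y k),
    C.pair (C.push f a) w = C.pair a (C.pull f w)
  pair_bd : ∀ {X : Type} {k : ℕ} (a : C.Chain X (k + 1)) (w : C.Form X k),
    C.pair (C.bd a) w = C.pair a (C.d w)
  bd_circleCycle : C.bd C.circleCycle = 0
  pair_circle : C.pair C.circleCycle C.circleForm = 1

/-! ## Lie groupoids (smoothness abstracted) -/

/-- The data of a (Lie) groupoid `Γ ⇉ M` with objects `O` and arrows `A`: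
source, target, units, partially defined composition (an arrow `g` may be
composed with `h` whenever `s g = t h`) and inversion. -/
structure GrpdOn (O A : Type) where
  s : A → O
  t : A → O
  unit : O → A
  comp : ∀ g h : A, s g = t h → A
  inv : A → A

/-- The groupoid axioms. -/
structure GrpdLaws {O A : Type} (G : GrpdOn O A) : Prop where
  s_unit : ∀ m, G.s (G.unit m) = m
  t_unit : ∀ m, G.t (G.unit m) = m
  s_comp : ∀ g h hgh, G.s (G.comp g h hgh) = G.s h
  t_comp : ∀ g h hgh, G.t (G.comp g h hgh) = G.t g
  s_inv : ∀ g, G.s (G.inv g) = G.t g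
  t_inv : ∀ g, G.t (G.inv g) = G.s g
  comp_unit : ∀ (g : A) (m : O), G.s g = m → ∀ h, G.comp g (G.unit m) h = g
  unit_comp : ∀ (g : A) (m : O), G.t g = m → ∀ h, G.comp (G.unit m) g h = g
  comp_inv : ∀ g h, G.comp g (G.inv g) h = G.unit (G.t g)
  inv_comp : ∀ g h, G.comp (G.inv g) g h = G.unit (G.s g)
  assoc : ∀ g h k hgh hhk h1 h2,
    G.comp (G.comp g h hgh) k h1 = G.comp g (G.comp h k hhk) h2

namespace GrpdOn

variable {O A : Type} (G : GrpdOn O A)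

/-- Composable pairs of arrows: the level `Γ₂` of the nerve. -/
def C2 : Type := { p : A × A // G.s p.1 = G.t p.2 }

/-- Composable triples of arrows: the level `Γ₃` of the nerve. -/
def C3 : Type :=
  { p : A × A × A // G.s p.1 = G.t p.2.1 ∧ G.s p.2.1 = G.t p.2.2 }

/-- The multiplication face map `Γ₂ → Γ₁`. -/
def m2 : G.C2 → A := fun p => G.comp p.val.1 p.val.2 p.property

/-- The face `d₀ : Γ₂ → Γ₁`, `(g, h) ↦ h`. -/
def f20 : G.C2 → A := fun p => p.val.2

/-- The face `d₂ : Γ₂ → Γ₁`, `(g, h) ↦ g`. -/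
def f22 : G.C2 → A := fun p => p.val.1

variable {G}

/-- The face `d₀ : Γ₃ → Γ₂`. -/
def f30 : G.C3 → G.C2 := fun p => ⟨(p.val.2.1, p.val.2.2), p.property.2⟩

/-- The face `d₃ : Γ₃ → Γ₂`. -/
def f33 : G.C3 → G.C2 := fun p => ⟨(p.val.1, p.val.2.1), p.property.1⟩

/-- The face `d₁ : Γ₃ → Γ₂`. -/
def f31 (hG : GrpdLaws G) : G.C3 → G.C2 := fun p =>
  ⟨(G.comp p.val.1 p.val.2.1 p.property.1, p.val.2.2),
    (hG.s_comp _ _ _).trans p.property.2⟩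

/-- The face `d₂ : Γ₃ → Γ₂`. -/
def f32 (hG : GrpdLaws G) : G.C3 → G.C2 := fun p =>
  ⟨(p.val.1, G.comp p.val.2.1 p.val.2.2 p.property.2),
    p.property.1.trans (hG.t_comp _ _ _).symm⟩

end GrpdOn

/-! ## The de Rham double complex of a groupoid (total degrees ≤ 3) -/

variable (C : DiffCtxCore)

/-- Simplicial differential `∂ : Ω^k(Γ₀) → Ω^k(Γ₁)`. -/
def bO1 {O A : Type} (G : GrpdOn O A) {k : ℕ} (a : C.Form O k) : C.Form A k :=
  C.pull G.s a - C.pull G.t a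

/-- Simplicial differential `∂ : Ω^k(Γ₁) → Ω^k(Γ₂)`. -/
def bA2 {O A : Type} (G : GrpdOn O A) {k : ℕ} (a : C.Form A k) : C.Form G.C2 k :=
  C.pull G.f20 a - C.pull G.m2 a + C.pull G.f22 a

/-- Simplicial differential `∂ : Ω^k(Γ₂) → Ω^k(Γ₃)`. -/
def b23 {O A : Type} {G : GrpdOn O A} (hG : GrpdLaws G) {k : ℕ}
    (a : C.Form G.C2 k) : C.Form G.C3 k :=
  C.pull GrpdOn.f30 a - C.pull (GrpdOn.f31 hG) a + C.pull (GrpdOn.f32 hG) a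
    - C.pull GrpdOn.f33 a

/-- Simplicial differential on chains `∂ : C_k(Γ₁) → C_k(Γ₀)`. -/
def cb10 {O A : Type} (G : GrpdOn O A) {k : ℕ} (c : C.Chain A k) : C.Chain O k :=
  C.push G.s c - C.push G.t c

/-- Simplicial differential on chains `∂ : C_k(Γ₂) → C_k(Γ₁)`. -/
def cb21 {O A : Type} (G : GrpdOn O A) {k : ℕ} (c : C.Chain G.C2 k) : C.Chain A k :=
  C.push G.f20 c - C.push G.m2 c + C.push G.f22 c

/-- Simplicial differential on chains `∂ : C_k(Γ₃) → C_k(Γ₂)`. -/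
def cb32 {O A : Type} {G : GrpdOn O A} (hG : GrpdLaws G) {k : ℕ}
    (c : C.Chain G.C3 k) : C.Chain G.C2 k :=
  C.push GrpdOn.f30 c - C.push (GrpdOn.f31 hG) c + C.push (GrpdOn.f32 hG) c
    - C.push GrpdOn.f33 c

/-- Total de Rham `1`-cochains `Ω¹(Γ₀) ⊕ Ω⁰(Γ₁)`. -/
abbrev Coch1 {O A : Type} (G : GrpdOn O A) : Type := C.Form O 1 × C.Form A 0

/-- Total de Rham `2`-cochains `Ω²(Γ₀) ⊕ Ω¹(Γ₁) ⊕ Ω⁰(Γ₂)`. -/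
abbrev Coch2 {O A : Type} (G : GrpdOn O A) : Type :=
  C.Form O 2 × C.Form A 1 × C.Form G.C2 0

/-- Total de Rham `3`-cochains `Ω³(Γ₀) ⊕ Ω²(Γ₁) ⊕ Ω¹(Γ₂) ⊕ Ω⁰(Γ₃)`. -/
abbrev Coch3 {O A : Type} (G : GrpdOn O A) : Type :=
  C.Form O 3 × C.Form A 2 × C.Form G.C2 1 × C.Form G.C3 0

/-- Total differential `δ = (-1)^p d + ∂` from total degree 1 to 2. -/
def delta12 {O A : Type} (G : GrpdOn O A) (a : Coch1 C G) : Coch2 C G :=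
  (C.d a.1, bO1 C G a.1 - C.d a.2, bA2 C G a.2)

/-- Total differential `δ = (-1)^p d + ∂` from total degree 2 to 3. -/
def delta23 {O A : Type} {G : GrpdOn O A} (hG : GrpdLaws G) (a : Coch2 C G) :
    Coch3 C G :=
  (C.d a.1, bO1 C G a.1 - C.d a.2.1, bA2 C G a.2.1 + C.d a.2.2, b23 C hG a.2.2)

/-- Total singular chains of degree 1. -/
abbrev Chn1 {O A : Type} (G : GrpdOn O A) : Type := C.Chain O 1 × C.Chain A 0

/-- Total singular chains of degree 2. -/
abbrev Chn2 {O A : Type} (G : GrpdOn O A) : Type :=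
  C.Chain O 2 × C.Chain A 1 × C.Chain G.C2 0

/-- Total singular chains of degree 3. -/
abbrev Chn3 {O A : Type} (G : GrpdOn O A) : Type :=
  C.Chain O 3 × C.Chain A 2 × C.Chain G.C2 1 × C.Chain G.C3 0

/-- Total boundary `δ = (-1)^p d + ∂` from total degree 2 to 1. -/
def deltaC21 {O A : Type} (G : GrpdOn O A) (c : Chn2 C G) : Chn1 C G :=
  (C.bd c.1 + cb10 C G c.2.1, -C.bd c.2.1 + cb21 C G c.2.2)

/-- Total boundary `δ = (-1)^p d + ∂` from total degree 3 to 2. -/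
def deltaC32 {O A : Type} {G : GrpdOn O A} (hG : GrpdLaws G) (c : Chn3 C G) :
    Chn2 C G :=
  (C.bd c.1 + cb10 C G c.2.1, -C.bd c.2.1 + cb21 C G c.2.2.1,
    C.bd c.2.2.1 + cb32 C hG c.2.2.2)

/-- Pairing of total 2-chains with total 2-cochains. -/
def pair2 {O A : Type} (G : GrpdOn O A) (c : Chn2 C G) (a : Coch2 C G) : ℝ :=
  C.pair c.1 a.1 + C.pair c.2.1 a.2.1 + C.pair c.2.2 a.2.2

/-- Pairing of total 3-chains with total 3-cochains. -/
def pair3 {O A : Type} (G : GrpdOn O A) (c : Chn3 C G) (a : Coch3 C G) : ℝ :=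
  C.pair c.1 a.1 + C.pair c.2.1 a.2.1 + C.pair c.2.2.1 a.2.2.1
    + C.pair c.2.2.2 a.2.2.2

/-- An integral total de Rham 2-cocycle pairs integrally with every total
2-cycle. -/
def IsIntegral2 {O A : Type} (G : GrpdOn O A) (a : Coch2 C G) : Prop :=
  ∀ Z : Chn2 C G, deltaC21 C G Z = 0 → ∃ n : ℤ, pair2 C G Z a = (n : ℝ)

/-- An integral total de Rham 3-cocycle pairs integrally with every total
3-cycle. -/
def IsIntegral3 {O A : Type} {G : GrpdOn O A} (hG : GrpdLaws G) (a : Coch3 C G) :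
    Prop :=
  ∀ Z : Chn3 C G, deltaC32 C hG Z = 0 → ∃ n : ℤ, pair3 C G Z a = (n : ℝ)

/-! ## Homomorphisms of groupoids -/

/-- A homomorphism of (Lie) groupoids. -/
structure GrpdHom {O A O' A' : Type} (G : GrpdOn O A) (H : GrpdOn O' A') where
  fo : O → O'
  fa : A → A'
  map_s : ∀ g, H.s (fa g) = fo (G.s g)
  map_t : ∀ g, H.t (fa g) = fo (G.t g)
  map_unit : ∀ m, fa (G.unit m) = H.unit (fo m)
  map_comp : ∀ g h hgh h', fa (G.comp g h hgh) = H.comp (fa g) (fa h) h'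

namespace GrpdHom

variable {O A O' A' : Type} {G : GrpdOn O A} {H : GrpdOn O' A'}

/-- Induced map on composable pairs. -/
def c2 (f : GrpdHom G H) : G.C2 → H.C2 := fun p =>
  ⟨(f.fa p.val.1, f.fa p.val.2),
    (f.map_s _).trans ((congrArg f.fo p.property).trans (f.map_t _).symm)⟩

/-- Induced map on composable triples. -/
def c3 (f : GrpdHom G H) : G.C3 → H.C3 := fun p =>
  ⟨(f.fa p.val.1, f.fa p.val.2.1, f.fa p.val.2.2),
    ⟨(f.map_s _).trans ((congrArg f.fo p.property.1).trans (f.map_t _).symm),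
      (f.map_s _).trans ((congrArg f.fo p.property.2).trans (f.map_t _).symm)⟩⟩

end GrpdHom

/-- Pull-back of total 2-cochains along a groupoid homomorphism. -/
def pullCoch2 {O A O' A' : Type} {G : GrpdOn O A} {H : GrpdOn O' A'}
    (f : GrpdHom G H) (a : Coch2 C H) : Coch2 C G :=
  (C.pull f.fo a.1, C.pull f.fa a.2.1, C.pull f.c2 a.2.2)

/-- Pull-back of total 3-cochains along a groupoid homomorphism. -/
def pullCoch3 {O A O' A' : Type} {G : GrpdOn O A} {H : GrpdOn O' A'}
    (f : GrpdHom G H) (a : Coch3 C H) : Coch3 C G :=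
  (C.pull f.fo a.1, C.pull f.fa a.2.1, C.pull f.c2 a.2.2.1, C.pull f.c3 a.2.2.2)

/-- Push-forward of total 2-chains along a groupoid homomorphism. -/
def pushChn2 {O A O' A' : Type} {G : GrpdOn O A} {H : GrpdOn O' A'}
    (f : GrpdHom G H) (c : Chn2 C G) : Chn2 C H :=
  (C.push f.fo c.1, C.push f.fa c.2.1, C.push f.c2 c.2.2)

/-- Push-forward of total 3-chains along a groupoid homomorphism. -/
def pushChn3 {O A O' A' : Type} {G : GrpdOn O A} {H : GrpdOn O' A'}
    (f : GrpdHom G H) (c : Chn3 C G) : Chn3 C H :=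
  (C.push f.fo c.1, C.push f.fa c.2.1, C.push f.c2 c.2.2.1, C.push f.c3 c.2.2.2)

/-! ## Pre-quasi-symplectic groupoids -/

/-- A pre-quasi-symplectic structure on the groupoid `Γ ⇉ M`: a 2-form
`w ∈ Ω²(Γ)` and a 3-form `W ∈ Ω³(M)` with `dW = 0`, `dw = ∂W`, `∂w = 0`,
i.e. `w + W` is a 3-cocycle of the total de Rham complex. -/
structure PQS {O A : Type} (G : GrpdOn O A) where
  w : C.Form A 2
  W : C.Form O 3
  dW_eq : C.d W = 0
  dw_eq : C.d w = bO1 C G W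
  bw_eq : bA2 C G w = 0

variable {C}

/-- A pre-quasi-symplectic groupoid is exact if the 3-form on the base is
exact. -/
def PQS.IsExact {O A : Type} {G : GrpdOn O A} (P : PQS C G) : Prop :=
  ∃ b : C.Form O 2, C.d b = P.W

/-- A pre-quasi-symplectic groupoid is integral if `w + W` is an integral
3-cocycle. -/
def PQS.IsIntegral {O A : Type} {G : GrpdOn O A} (P : PQS C G)
    (hG : GrpdLaws G) : Prop :=
  IsIntegral3 C hG ((P.W, P.w, 0, 0) : Coch3 C G)

/-! ## Groupoid actions and transformation groupoids -/

variable (C)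

/-- A left action of the groupoid `Γ ⇉ M` on `J : X → M`. -/
structure ActionOn {O A : Type} (G : GrpdOn O A) (X : Type) where
  J : X → O
  act : ∀ (g : A) (x : X), G.s g = J x → X

/-- The axioms of a left groupoid action. -/
structure ActionLaws {O A X : Type} {G : GrpdOn O A} (r : ActionOn G X) : Prop where
  J_act : ∀ g x h, r.J (r.act g x h) = G.t g
  act_unit : ∀ x h, r.act (G.unit (r.J x)) x h = x
  act_comp : ∀ g h x hhx hgh h1 h2,
    r.act (G.comp g h hgh) x h1 = r.act g (r.act h x hhx) h2

namespace ActionOn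

variable {O A X : Type} {G : GrpdOn O A}

theorem act_congr (r : ActionOn G X) {g g' : A} (hg : g = g') (x : X)
    (h : G.s g = r.J x) (h' : G.s g' = r.J x) : r.act g x h = r.act g' x h' := by
  subst hg; rfl

/-- The space of arrows `Γ ×_M X` of the transformation groupoid. -/
def Mor (r : ActionOn G X) : Type := { p : A × X // G.s p.1 = r.J p.2 }

/-- The transformation groupoid `Γ ⋉ X ⇉ X` of a groupoid action. -/
def trans (r : ActionOn G X) (hG : GrpdLaws G) (hr : ActionLaws r) :
    GrpdOn X r.Mor where
  s p := p.val.2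
  t p := r.act p.val.1 p.val.2 p.property
  unit x := ⟨(G.unit (r.J x), x), hG.s_unit _⟩
  comp p q hpq :=
    ⟨(G.comp p.val.1 q.val.1
        (p.property.trans ((congrArg r.J hpq).trans (hr.J_act _ _ _))), q.val.2),
      (hG.s_comp _ _ _).trans q.property⟩
  inv p :=
    ⟨(G.inv p.val.1, r.act p.val.1 p.val.2 p.property),
      (hG.s_inv _).trans (hr.J_act _ _ _).symm⟩

/-- The canonical projection homomorphism from the transformation groupoid
`Γ ⋉ X ⇉ X` to `Γ ⇉ M` (denoted `J` in the paper). -/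
def proj (r : ActionOn G X) (hG : GrpdLaws G) (hr : ActionLaws r) :
    GrpdHom (r.trans hG hr) G where
  fo := r.J
  fa p := p.val.1
  map_s p := p.property
  map_t p := (hr.J_act _ _ _).symm
  map_unit _ := rfl
  map_comp _ _ _ _ := rfl

end ActionOn

/-- The transformation groupoid of a lawful action of a lawful groupoid is a
lawful groupoid. -/
theorem transLaws {O A X : Type} {G : GrpdOn O A} (hG : GrpdLaws G)
    {r : ActionOn G X} (hr : ActionLaws r) : GrpdLaws (r.trans hG hr) := by
  constructor
  · intro m; rfl
  · intro m; exact hr.act_unit m _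
  · intro g h hgh; rfl
  · intro g h hgh
    obtain ⟨⟨a, y⟩, hy⟩ := g
    obtain ⟨⟨b, x⟩, hx⟩ := h
    show r.act (G.comp a b _) x _ = r.act a y hy
    have hgh' : y = r.act b x hx := hgh
    subst hgh'
    exact hr.act_comp a b x hx _ _ _
  · intro g; rfl
  · intro g
    obtain ⟨⟨a, x⟩, hx⟩ := g
    show r.act (G.inv a) (r.act a x hx) _ = x
    have h3 : G.s (G.comp (G.inv a) a (hG.s_inv a)) = r.J x :=
      (hG.s_comp _ _ _).trans hx
    refine Eq.trans (hr.act_comp (G.inv a) a x hx (hG.s_inv a) h3 _).symm ?_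
    refine Eq.trans (r.act_congr
      ((hG.inv_comp a (hG.s_inv a)).trans (congrArg G.unit hx)) x h3
      ((hG.s_unit _))) ?_
    exact hr.act_unit x _
  · intro g m hm h
    obtain ⟨⟨a, x⟩, hx⟩ := g
    have hm' : x = m := hm
    subst hm'
    exact Subtype.ext (Prod.ext (hG.comp_unit a (r.J x) hx _) rfl)
  · intro g m hm h
    obtain ⟨⟨a, x⟩, hx⟩ := g
    have hm' : r.act a x hx = m := hm
    subst hm'
    refine Subtype.ext (Prod.ext ?_ rfl)
    exact hG.unit_comp a (r.J (r.act a x hx)) ((hr.J_act a x hx).symm) _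
  · intro g h
    obtain ⟨⟨a, x⟩, hx⟩ := g
    refine Subtype.ext (Prod.ext ?_ rfl)
    exact (hG.comp_inv a _).trans (congrArg G.unit (hr.J_act a x hx).symm)
  · intro g h
    obtain ⟨⟨a, x⟩, hx⟩ := g
    refine Subtype.ext (Prod.ext ?_ rfl)
    exact (hG.inv_comp a _).trans (congrArg G.unit hx)
  · intro g h k hgh hhk h1 h2
    exact Subtype.ext (Prod.ext (hG.assoc _ _ _ _ _ _ _) rfl)

variable {C}

/-- The isotropy condition on the graph of an action: the pull-back of the
2-form `(w, w_X, -w_X)` on `Γ × X × X̄` to the graph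
`Λ = {(g, x, g·x)}` vanishes. -/
def IsotropicGraph {O A X : Type} {G : GrpdOn O A} (w : C.Form A 2)
    (r : ActionOn G X) (wX : C.Form X 2) : Prop :=
  C.pull (fun p : r.Mor => p.val.1) w + C.pull (fun p : r.Mor => p.val.2) wX
    - C.pull (fun p : r.Mor => r.act p.val.1 p.val.2 p.property) wX = 0

variable (C)

/-- A pre-Hamiltonian `Γ`-space of the pre-quasi-symplectic groupoid
`(Γ ⇉ M, w + W)`: a left `Γ`-space `J : X → M` with a 2-form
`w_X ∈ Ω²(X)` such that `d w_X = J^* W` and the graph of the action is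
isotropic with respect to `(w, w_X, -w_X)`. -/
structure PreHamOn {O A : Type} {G : GrpdOn O A} (P : PQS C G) (X : Type) where
  ρ : ActionOn G X
  laws : ActionLaws ρ
  wX : C.Form X 2
  dwX : C.d wX = C.pull ρ.J P.W
  isotropic : IsotropicGraph P.w ρ wX

/-- Isomorphism of pre-Hamiltonian `Γ`-spaces: an equivariant diffeomorphism
commuting with the momentum maps and matching the 2-forms. -/
def PreHamIso {O A X X' : Type} {G : GrpdOn O A} {P : PQS C G}
    (H1 : PreHamOn C P X) (H2 : PreHamOn C P X') : Prop :=
  ∃ e : X ≃ X',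
    (∀ x, H2.ρ.J (e x) = H1.ρ.J x) ∧
    (∀ g x h h', e (H1.ρ.act g x h) = H2.ρ.act g (e x) h') ∧
    C.pull (⇑e) H2.wX = H1.wX

/-- The integrality condition (Definition 5.2 of the paper) for the pair
`(w_X, w + W)`: for every total 2-cycle `C` of the transformation groupoid
`Γ ⋉ X ⇉ X` and every total 3-chain `D` on `Γ_•` with `δD = J_*(C)`, the
number `∫_C w_X - ∫_D (w + W)` is an integer. -/
def IntegralityCondition {O A X : Type} (G : GrpdOn O A) (hG : GrpdLaws G)
    (w : C.Form A 2) (W : C.Form O 3) (r : ActionOn G X) (hr : ActionLaws r)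
    (wX : C.Form X 2) : Prop :=
  ∀ (Cc : Chn2 C (r.trans hG hr)) (D : Chn3 C G),
    deltaC21 C (r.trans hG hr) Cc = 0 →
    pushChn2 C (r.proj hG hr) Cc = deltaC32 C hG D →
    ∃ n : ℤ,
      pair2 C (r.trans hG hr) Cc (wX, 0, 0) - pair3 C G D (W, w, 0, 0) = (n : ℝ)

/-! ## S¹-central extensions -/

/-- An `S¹`-central extension `R → Γ ⇉ M` of the groupoid `Γ ⇉ M`:
a groupoid `R ⇉ M` over the same objects, a projection `π` which is a
morphism of groupoids fixing the objects, a principal `S¹`-action on `R`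
along the fibres of `π`, compatible with the groupoid structure in the
central way `(z·x)(v·y) = (zv)·(xy)`. -/
structure CentExt {O A : Type} (G : GrpdOn O A) (R : Type) where
  RG : GrpdOn O R
  π : R → A
  π_surj : Function.Surjective π
  π_s : ∀ r, G.s (π r) = RG.s r
  π_t : ∀ r, G.t (π r) = RG.t r
  π_unit : ∀ m, π (RG.unit m) = G.unit m
  π_comp : ∀ r r' h h', π (RG.comp r r' h) = G.comp (π r) (π r') h'
  smul : Circle → R → R
  one_smul : ∀ r, smul 1 r = r
  mul_smul : ∀ z v r, smul (z * v) r = smul z (smul v r)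
  π_smul : ∀ z r, π (smul z r) = π r
  s_smul : ∀ z r, RG.s (smul z r) = RG.s r
  t_smul : ∀ z r, RG.t (smul z r) = RG.t r
  free : ∀ z r, smul z r = r → z = 1
  fib_trans : ∀ r r', π r = π r' → ∃ z, smul z r = r'
  central : ∀ z v r r' h h',
    RG.comp (smul z r) (smul v r') h = smul (z * v) (RG.comp r r' h')

namespace CentExt

variable {O A R : Type} {G : GrpdOn O A}

/-- The projection of a central extension as a groupoid homomorphism. -/
def πHom (E : CentExt G R) : GrpdHom E.RG G where
  fo := fun m => m
  fa := E.π
  map_s := E.π_s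
  map_t := E.π_t
  map_unit := E.π_unit
  map_comp := E.π_comp

/-- The map `f_m : S¹ → R`, `λ ↦ λ · 1_m`. -/
def fib (E : CentExt G R) (m : O) : Circle → R := fun z => E.smul z (E.RG.unit m)

/-- The total 2-chain `Z_m = (f_m)_* C_{S¹}` of the groupoid `R_•`. -/
def Zm (E : CentExt G R) (m : O) : Chn2 C E.RG :=
  (0, C.push (E.fib m) C.circleCycle, 0)

/-- The total 2-chain `Z_r = (f_r)_* C_{S¹} - C_r`, where `f_r(λ) = λ·r` and
`C_r` is the constant loop at `r`. -/
def Zr (E : CentExt G R) (r : R) : Chn2 C E.RG :=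
  (0, C.push (fun z => E.smul z r) C.circleCycle
      - C.push (fun _ : Circle => r) C.circleCycle, 0)

/-- The action of `R ⇉ M` on a `Γ`-space `J : X → M` obtained through `π`. -/
def pullAct (E : CentExt G R) {X : Type} (r : ActionOn G X) :
    ActionOn E.RG X where
  J := r.J
  act q x h := r.act (E.π q) x ((E.π_s q).trans h)

theorem pullActLaws (E : CentExt G R) {X : Type} (r : ActionOn G X)
    (hr : ActionLaws r) : ActionLaws (E.pullAct r) := by
  constructor
  · intro q x h
    exact (hr.J_act _ _ _).trans (E.π_t q)
  · intro x h
    have h0 : G.s (E.π (E.RG.unit (r.J x))) = r.J x := (E.π_s _).trans h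
    exact (r.act_congr (E.π_unit (r.J x)) x h0
      (((congrArg G.s (E.π_unit (r.J x))).symm).trans h0)).trans
      (hr.act_unit x _)
  · intro q q' x hhx hqq' h1 h2
    have hπ : G.s (E.π q) = G.t (E.π q') :=
      (E.π_s q).trans (hqq'.trans (E.π_t q').symm)
    have h0 : G.s (E.π (E.RG.comp q q' hqq')) = r.J x := (E.π_s _).trans h1
    have h3 : G.s (G.comp (E.π q) (E.π q') hπ) = r.J x :=
      ((congrArg G.s (E.π_comp q q' hqq' hπ)).symm).trans h0
    exact (r.act_congr (E.π_comp q q' hqq' hπ) x h0 h3).trans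
      (hr.act_comp (E.π q) (E.π q') x ((E.π_s q').trans hhx) hπ h3
        ((E.π_s q).trans h2))

/-- The transformation groupoid `R ×_M X ⇉ X` of the pulled back action. -/
def pullTrans (E : CentExt G R) {X : Type} (r : ActionOn G X)
    (hR : GrpdLaws E.RG) (hr : ActionLaws r) : GrpdOn X (E.pullAct r).Mor :=
  (E.pullAct r).trans hR (E.pullActLaws r hr)

/-- The projection `J : R ×_M X → R` as a homomorphism of groupoids from
`R ×_M X ⇉ X` to `R ⇉ M`. -/
def JHom (E : CentExt G R) {X : Type} {r : ActionOn G X} (hR : GrpdLaws E.RG)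
    (hr : ActionLaws r) : GrpdHom (E.pullTrans r hR hr) E.RG where
  fo := r.J
  fa q := q.val.1
  map_s q := q.property
  map_t q := ((hr.J_act _ _ _).trans (E.π_t _)).symm
  map_unit _ := rfl
  map_comp _ _ _ _ := rfl

/-- The projection `π : R ×_M X → Γ ×_M X` as a homomorphism of the pulled
back central extension to the transformation groupoid `Γ ×_M X ⇉ X`. -/
def piXHom (E : CentExt G R) {X : Type} {r : ActionOn G X} (hG : GrpdLaws G)
    (hR : GrpdLaws E.RG) (hr : ActionLaws r) :
    GrpdHom (E.pullTrans r hR hr) (r.trans hG hr) where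
  fo := fun x => x
  fa q := ⟨(E.π q.val.1, q.val.2), (E.π_s _).trans q.property⟩
  map_s _ := rfl
  map_t _ := rfl
  map_unit _ := Subtype.ext (Prod.ext (E.π_unit _) rfl)
  map_comp _ _ _ _ := Subtype.ext (Prod.ext (E.π_comp _ _ _ _) rfl)

end CentExt

/-- The orbit relation of the groupoid `Γ ⇉ M` on its base. -/
def orbRel {O A : Type} (G : GrpdOn O A) : O → O → Prop :=
  fun m n => ∃ g : A, G.s g = m ∧ G.t g = n

/-- A connection-type 1-form for a principal `S¹`-action: its pull-back along
every orbit inclusion `S¹ → T`, `z ↦ z · x` is the normalized Maurer–Cartan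
form of `S¹`. -/
def IsConnForm {T : Type} (sm : Circle → T → T) (th : C.Form T 1) : Prop :=
  ∀ x : T, C.pull (fun z : Circle => sm z x) th = C.circleForm

/-! ## Principal S¹-bundles over a central extension -/

/-- A (right, written here on the left) principal `S¹`-bundle `L → M` over the
groupoid `R ⇉ M`, where `R → Γ ⇉ M` is an `S¹`-central extension.
The field `act_integral` is the surrogate, in this abstract setting, of the
smoothness of the action: for every `m` the induced homomorphism
`S¹ → S¹` is of the form `z ↦ z^k`. -/
structure GrpdS1Bundle {O A R : Type} {G : GrpdOn O A} (E : CentExt G R)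
    (L : Type) where
  p : L → O
  p_surj : Function.Surjective p
  bsmul : Circle → L → L
  bsmul_one : ∀ l, bsmul 1 l = l
  bsmul_mul : ∀ z v l, bsmul (z * v) l = bsmul z (bsmul v l)
  p_bsmul : ∀ z l, p (bsmul z l) = p l
  bfree : ∀ z l, bsmul z l = l → z = 1
  bfib_trans : ∀ l l', p l = p l' → ∃ z, bsmul z l = l'
  ract : ∀ (q : R) (l : L), E.RG.s q = p l → L
  p_ract : ∀ q l h, p (ract q l h) = E.RG.t q
  ract_unit : ∀ l h, ract (E.RG.unit (p l)) l h = l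
  ract_comp : ∀ q q' l hqq' h1 h2 h3,
    ract (E.RG.comp q q' hqq') l h1 = ract q (ract q' l h2) h3
  ract_bsmul : ∀ z q l h h', ract q (bsmul z l) h = bsmul z (ract q l h')
  act_integral : ∀ m : O, ∃ k : ℤ, ∀ (z : Circle) (l : L)
    (h : E.RG.s (E.smul z (E.RG.unit m)) = p l),
    ract (E.smul z (E.RG.unit m)) l h = bsmul (z ^ k) l

namespace GrpdS1Bundle

variable {O A R L : Type} {G : GrpdOn O A} {E : CentExt G R}

/-- The index `Ind_m(L)` of the bundle at `m`. -/
def ind (B : GrpdS1Bundle E L) (m : O) : ℤ := (B.act_integral m).choose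

/-- The fibre of the bundle at `m`. -/
def fiber (B : GrpdS1Bundle E L) (m : O) : Type := { l : L // B.p l = m }

/-- The underlying action of `R ⇉ M` on `L`. -/
def action (B : GrpdS1Bundle E L) : ActionOn E.RG L where
  J := B.p
  act := B.ract

theorem actionLaws (B : GrpdS1Bundle E L) : ActionLaws B.action :=
  ⟨B.p_ract, B.ract_unit,
    fun g h x hhx hgh h1 h2 => B.ract_comp g h x hgh h1 hhx h2⟩

/-- The bundle `L → M` is a `(Γ, R)`-twisted line bundle when the kernel
`ker π ≅ M × S¹` acts by scalar multiplication. -/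
def IsTwisted (B : GrpdS1Bundle E L) : Prop :=
  ∀ (m : O) (z : Circle) (l : L) (h : E.RG.s (E.smul z (E.RG.unit m)) = B.p l),
    B.ract (E.smul z (E.RG.unit m)) l h = B.bsmul z l

end GrpdS1Bundle

/-! ## Prequantizations -/

/-- A prequantization of a pre-quasi-symplectic groupoid `(Γ ⇉ M, w + W)`:
an `S¹`-central extension `R → Γ ⇉ M` together with a pseudo-connection
`θ + B ∈ Ω¹(R) ⊕ Ω²(M)` (with `θ` a connection 1-form for `R → Γ`) such that
`δ(θ + B) = π^*(w + W)`. -/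
structure Preq {O A : Type} {G : GrpdOn O A} (P : PQS C G) {R : Type}
    (E : CentExt G R) (hR : GrpdLaws E.RG) where
  θ : C.Form R 1
  B : C.Form O 2
  conn : IsConnForm C E.smul θ
  curv : delta23 C hR ((B, θ, 0) : Coch2 C E.RG)
    = pullCoch3 C E.πHom ((P.W, P.w, 0, 0) : Coch3 C G)

/-- A compatible prequantization of a pre-Hamiltonian `Γ`-space `(X, w_X)`
(Definition 4.2 of the paper): an `S¹`-bundle `φ : L → X` with connection
1-form `θ_L`, an `R`-action on `L` covering the `Γ`-action on `X`, such that
the combined action is `S¹`-bi-equivariant, `(θ, θ_L, -θ_L)` vanishes on the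
graph of the action, and `dθ_L = φ^*(J^* B - w_X)`. -/
structure CompatPreq {O A R X : Type} {G : GrpdOn O A} {P : PQS C G}
    {E : CentExt G R} {hR : GrpdLaws E.RG} (Q : Preq C P E hR)
    (H : PreHamOn C P X) (L : Type) where
  φ : L → X
  φ_surj : Function.Surjective φ
  lsmul : Circle → L → L
  lsmul_one : ∀ l, lsmul 1 l = l
  lsmul_mul : ∀ z v l, lsmul (z * v) l = lsmul z (lsmul v l)
  φ_lsmul : ∀ z l, φ (lsmul z l) = φ l
  lfree : ∀ z l, lsmul z l = l → z = 1
  lfib_trans : ∀ l l', φ l = φ l' → ∃ z, lsmul z l = l'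
  lact : ∀ (q : R) (l : L), E.RG.s q = H.ρ.J (φ l) → L
  φ_lact : ∀ q l h h', φ (lact q l h) = H.ρ.act (E.π q) (φ l) h'
  lact_unit : ∀ l h, lact (E.RG.unit (H.ρ.J (φ l))) l h = l
  lact_comp : ∀ q q' l hqq' h1 h2 h3,
    lact (E.RG.comp q q' hqq') l h1 = lact q (lact q' l h2) h3
  lact_lsmul : ∀ z v q l h h',
    lact (E.smul z q) (lsmul v l) h = lsmul (z * v) (lact q l h')
  θL : C.Form L 1
  connL : IsConnForm C lsmul θL
  graph :
    C.pull (fun p : { q : R × L // E.RG.s q.1 = H.ρ.J (φ q.2) } => p.val.1) Q.θ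
      + C.pull (fun p : { q : R × L // E.RG.s q.1 = H.ρ.J (φ q.2) } => p.val.2) θL
      - C.pull
          (fun p : { q : R × L // E.RG.s q.1 = H.ρ.J (φ q.2) } =>
            lact p.val.1 p.val.2 p.property) θL
      = 0
  dθL : C.d θL = C.pull φ (C.pull H.ρ.J Q.B - H.wX)

/-- Isomorphism of compatible prequantizations. -/
def CompatPreqIso {O A R X : Type} {G : GrpdOn O A} {P : PQS C G}
    {E : CentExt G R} {hR : GrpdLaws E.RG} {Q : Preq C P E hR}
    {H : PreHamOn C P X} {L1 L2 : Type} (c1 : CompatPreq C Q H L1)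
    (c2 : CompatPreq C Q H L2) : Prop :=
  ∃ e : L1 ≃ L2,
    (∀ l, c2.φ (e l) = c1.φ l) ∧
    (∀ z l, e (c1.lsmul z l) = c2.lsmul z (e l)) ∧
    (∀ q l h h', e (c1.lact q l h) = c2.lact q (e l) h') ∧
    C.pull (⇑e) c2.θL = c1.θL

/-! ## Quotient manifolds -/

/-- The data of a smooth quotient manifold `Γ \ Y` of a groupoid action:
a surjection whose fibres are exactly the orbits, along which forms with
`∂α = 0` (w.r.t. the transformation groupoid) descend, uniquely. -/
structure QuotientManifold {O A Y : Type} {G : GrpdOn O A} (r : ActionOn G Y)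
    (Qt : Type) where
  pr : Y → Qt
  surj : Function.Surjective pr
  invariant : ∀ g y h, pr (r.act g y h) = pr y
  fibers : ∀ y y', pr y = pr y' → ∃ g h, r.act g y h = y'
  descend : ∀ (k : ℕ) (a : C.Form Y k),
    C.pull (fun p : r.Mor => p.val.2) a
      = C.pull (fun p : r.Mor => r.act p.val.1 p.val.2 p.property) a →
    ∃ b : C.Form Qt k, C.pull pr b = a
  pull_inj : ∀ (k : ℕ) (b b' : C.Form Qt k), C.pull pr b = C.pull pr b' → b = b'

/-- The diagonal action of `Γ` on `X̄₂ ×_M X₁` for two pre-Hamiltonian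
`Γ`-spaces. -/
def diagPreHamAction {O A X1 X2 : Type} {G : GrpdOn O A} {P : PQS C G}
    (H2 : PreHamOn C P X2) (H1 : PreHamOn C P X1) :
    ActionOn G { q : X2 × X1 // H2.ρ.J q.1 = H1.ρ.J q.2 } where
  J q := H1.ρ.J q.val.2
  act g q h :=
    ⟨(H2.ρ.act g q.val.1 (h.trans q.property.symm), H1.ρ.act g q.val.2 h),
      (H2.laws.J_act _ _ _).trans (H1.laws.J_act _ _ _).symm⟩

theorem diagPreHamActionLaws {O A X1 X2 : Type} {G : GrpdOn O A} {P : PQS C G}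
    (H2 : PreHamOn C P X2) (H1 : PreHamOn C P X1) :
    ActionLaws (diagPreHamAction C H2 H1) := by
  constructor
  · intro g q h
    exact H1.laws.J_act g q.val.2 h
  · intro q h
    obtain ⟨⟨x2, x1⟩, hq⟩ := q
    refine Subtype.ext (Prod.ext ?_ (H1.laws.act_unit x1 h))
    have e : G.unit (H1.ρ.J x1) = G.unit (H2.ρ.J x2) := congrArg G.unit hq.symm
    refine (H2.ρ.act_congr e x2 _ ?_).trans (H2.laws.act_unit x2 _)
    exact (congrArg G.s e).symm.trans (h.trans hq.symm)
  · intro g h x hhx hgh h1 h2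
    refine Subtype.ext (Prod.ext ?_ ?_)
    · exact H2.laws.act_comp g h x.val.1 _ hgh _ _
    · exact H1.laws.act_comp g h x.val.2 hhx hgh _ _


/-! ## Bundle actions of the pulled-back groupoid (for Proposition 5.4) -/

/-- Given an `S¹`-bundle `φ : L → X` over a pre-Hamiltonian space with an
`R`-action `lact`, the induced action of the transformation groupoid
`R ×_M X ⇉ X` on `L`. -/
def bundleAction {O A R X L : Type} {G : GrpdOn O A} (E : CentExt G R)
    (r : ActionOn G X) (hR : GrpdLaws E.RG) (hr : ActionLaws r) (φ : L → X)
    (lact : ∀ (q : R) (l : L), E.RG.s q = r.J (φ l) → L) :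
    ActionOn (E.pullTrans r hR hr) L where
  J := φ
  act q l h := lact q.val.1 l (q.property.trans (congrArg r.J h))

theorem bundleActionLaws {O A R X L : Type} {G : GrpdOn O A} (E : CentExt G R)
    (r : ActionOn G X) (hR : GrpdLaws E.RG) (hr : ActionLaws r) (φ : L → X)
    (lact : ∀ (q : R) (l : L), E.RG.s q = r.J (φ l) → L)
    (hφl : ∀ q l h h', φ (lact q l h) = r.act (E.π q) (φ l) h')
    (hunit : ∀ l h, lact (E.RG.unit (r.J (φ l))) l h = l)
    (hcomp : ∀ q q' l hqq' h1 h2 h3,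
      lact (E.RG.comp q q' hqq') l h1 = lact q (lact q' l h2) h3) :
    ActionLaws (bundleAction E r hR hr φ lact) := by
  constructor
  · intro q l h
    obtain ⟨⟨a, x⟩, hax⟩ := q
    have hx : x = φ l := h
    subst hx
    exact hφl a l _ _
  · intro l h
    exact hunit l _
  · intro q q' l hhx hgh h1 h2
    exact hcomp q.val.1 q'.val.1 l _ _ _ _

/-! ## Diagonal actions on products of prequantization bundles -/

/-- The diagonal action of `R ⇉ M` on `L₂ ×_M L₁` for two compatible
prequantizations of pre-Hamiltonian `Γ`-spaces. -/
def diagPreqAction {O A R X1 X2 L1 L2 : Type} {G : GrpdOn O A} {P : PQS C G}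
    {E : CentExt G R} {hR : GrpdLaws E.RG} {Q : Preq C P E hR}
    {H2 : PreHamOn C P X2} {H1 : PreHamOn C P X1}
    (c2 : CompatPreq C Q H2 L2) (c1 : CompatPreq C Q H1 L1) :
    ActionOn E.RG { y : L2 × L1 // H2.ρ.J (c2.φ y.1) = H1.ρ.J (c1.φ y.2) } where
  J y := H1.ρ.J (c1.φ y.val.2)
  act q y h :=
    ⟨(c2.lact q y.val.1 (h.trans y.property.symm), c1.lact q y.val.2 h),
      (((congrArg H2.ρ.J
            (c2.φ_lact q y.val.1 (h.trans y.property.symm)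
              ((E.π_s q).trans (h.trans y.property.symm)))).trans
          (H2.laws.J_act _ _ _)).trans
        (((congrArg H1.ρ.J (c1.φ_lact q y.val.2 h ((E.π_s q).trans h))).trans
            (H1.laws.J_act _ _ _)).symm))⟩

theorem diagPreqActionLaws {O A R X1 X2 L1 L2 : Type} {G : GrpdOn O A}
    {P : PQS C G} {E : CentExt G R} {hR : GrpdLaws E.RG} {Q : Preq C P E hR}
    {H2 : PreHamOn C P X2} {H1 : PreHamOn C P X1}
    (c2 : CompatPreq C Q H2 L2) (c1 : CompatPreq C Q H1 L1) :
    ActionLaws (diagPreqAction C c2 c1) := by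
  have key : ∀ (y1 : L2) (u u' : R) (hu : u = u')
      (hl : E.RG.s u = H2.ρ.J (c2.φ y1)) (hl' : E.RG.s u' = H2.ρ.J (c2.φ y1)),
      c2.lact u y1 hl = c2.lact u' y1 hl' := by
    intro y1 u u' hu hl hl'; subst hu; rfl
  constructor
  · intro q y h
    exact (congrArg H1.ρ.J
      (c1.φ_lact q y.val.2 h ((E.π_s q).trans h))).trans
      ((H1.laws.J_act _ _ _).trans (E.π_t q))
  · intro y h
    obtain ⟨⟨y2, y1⟩, hy⟩ := y
    refine Subtype.ext (Prod.ext ?_ (c1.lact_unit y1 h))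
    refine (key y2 _ _ (congrArg E.RG.unit hy.symm) _ ?_).trans
      (c2.lact_unit y2 _)
    exact (congrArg E.RG.s (congrArg E.RG.unit hy.symm)).symm.trans
      (h.trans hy.symm)
  · intro q q' y hhx hgh h1 h2
    refine Subtype.ext (Prod.ext ?_ ?_)
    · exact c2.lact_comp q q' y.val.1 hgh _ _ _
    · exact c1.lact_comp q q' y.val.2 hgh _ _ _

/-! ## Morita equivalence -/

/-- A Morita equivalence bimodule between two pre-quasi-symplectic groupoids
`(G ⇉ G₀, w_G + W_G)` and `(H ⇉ H₀, w_H + W_H)`: a biprincipal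
`(G, H)`-bibundle `G₀ ← X → H₀` equipped with a 2-form `w_X` making `X` a
pre-Hamiltonian `G × H̄`-space for the action `(g, h)·x = g x h⁻¹`. -/
structure MoritaBimodule {O1 A1 O2 A2 : Type} {G : GrpdOn O1 A1}
    {Hg : GrpdOn O2 A2} (PG : PQS C G) (PH : PQS C Hg) (Xb : Type) where
  ρl : ActionOn G Xb
  lawsl : ActionLaws ρl
  σ : Xb → O2
  ractH : ∀ (h : A2) (x : Xb), Hg.t h = σ x → Xb
  σ_ract : ∀ h x hh, σ (ractH h x hh) = Hg.s h
  J_ract : ∀ h x hh, ρl.J (ractH h x hh) = ρl.J x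
  σ_actl : ∀ g x hg, σ (ρl.act g x hg) = σ x
  ract_unit : ∀ x h, ractH (Hg.unit (σ x)) x h = x
  ract_comp : ∀ h h' x hhh' h1 h2 h3,
    ractH (Hg.comp h h' hhh') x h1 = ractH h' (ractH h x h2) h3
  actComm : ∀ (g : A1) (h : A2) (x : Xb) (hh : Hg.t h = σ x)
    (hg : G.s g = ρl.J (ractH h x hh)) (hg' : G.s g = ρl.J x)
    (hh' : Hg.t h = σ (ρl.act g x hg')),
    ρl.act g (ractH h x hh) hg = ractH h (ρl.act g x hg') hh'
  freeG : ∀ g x hg, ρl.act g x hg = x → g = G.unit (ρl.J x)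
  transG : ∀ x y, σ x = σ y → ∃ g hg, ρl.act g x hg = y
  freeH : ∀ h x hh, ractH h x hh = x → h = Hg.unit (σ x)
  transH : ∀ x y, ρl.J x = ρl.J y → ∃ h hh, ractH h x hh = y
  J_surj : Function.Surjective ρl.J
  σ_surj : Function.Surjective σ
  wXb : C.Form Xb 2
  dwXb : C.d wXb = C.pull ρl.J PG.W - C.pull σ PH.W
  isotropic :
    C.pull (fun q : { u : A1 × A2 × Xb //
        G.s u.1 = ρl.J u.2.2 ∧ Hg.t u.2.1 = σ u.2.2 } => q.val.1) PG.w
      - C.pull (fun q : { u : A1 × A2 × Xb //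
          G.s u.1 = ρl.J u.2.2 ∧ Hg.t u.2.1 = σ u.2.2 } => q.val.2.1) PH.w
      + C.pull (fun q : { u : A1 × A2 × Xb //
          G.s u.1 = ρl.J u.2.2 ∧ Hg.t u.2.1 = σ u.2.2 } => q.val.2.2) wXb
      - C.pull (fun q : { u : A1 × A2 × Xb //
          G.s u.1 = ρl.J u.2.2 ∧ Hg.t u.2.1 = σ u.2.2 } =>
            ρl.act q.val.1 (ractH q.val.2.1 q.val.2.2 q.property.2)
              (q.property.1.trans (J_ract _ _ _).symm)) wXb
      = 0

/-- `F` (a pre-Hamiltonian `G`-space) and `E` (a pre-Hamiltonian `H`-space)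
are a pair of related pre-Hamiltonian spaces via the explicit map
`Φ : X ×_{G₀} F → E` which realizes `E` as `X̄ ×_G F`. -/
def RelatedVia {O1 A1 O2 A2 Xb Xf Xe : Type} {G : GrpdOn O1 A1}
    {Hg : GrpdOn O2 A2} {PG : PQS C G} {PH : PQS C Hg}
    (M : MoritaBimodule C PG PH Xb) (F : PreHamOn C PG Xf)
    (Eh : PreHamOn C PH Xe)
    (Φ : { q : Xb × Xf // M.ρl.J q.1 = F.ρ.J q.2 } → Xe) : Prop :=
  Function.Surjective Φ ∧
  (∀ q, Eh.ρ.J (Φ q) = M.σ q.val.1) ∧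
  (∀ (g : A1) (q : { q : Xb × Xf // M.ρl.J q.1 = F.ρ.J q.2 })
      (hg : G.s g = M.ρl.J q.val.1),
    Φ ⟨(M.ρl.act g q.val.1 hg, F.ρ.act g q.val.2 (hg.trans q.property)),
        (M.lawsl.J_act _ _ _).trans (F.laws.J_act _ _ _).symm⟩ = Φ q) ∧
  (∀ q q', Φ q = Φ q' →
    ∃ (g : A1) (hg : G.s g = M.ρl.J q.val.1) (hf : G.s g = F.ρ.J q.val.2),
      q'.val.1 = M.ρl.act g q.val.1 hg ∧ q'.val.2 = F.ρ.act g q.val.2 hf) ∧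
  (∀ (h : A2) (q : { q : Xb × Xf // M.ρl.J q.1 = F.ρ.J q.2 })
      (hh : Hg.t h = M.σ q.val.1)
      (he : Hg.s (Hg.inv h) = Eh.ρ.J (Φ q)),
    Φ ⟨(M.ractH h q.val.1 hh, q.val.2), (M.J_ract _ _ _).trans q.property⟩
      = Eh.ρ.act (Hg.inv h) (Φ q) he) ∧
  C.pull Φ Eh.wX
    = -C.pull (fun q : { q : Xb × Xf // M.ρl.J q.1 = F.ρ.J q.2 } => q.val.1)
          M.wXb
      + C.pull (fun q : { q : Xb × Xf // M.ρl.J q.1 = F.ρ.J q.2 } => q.val.2)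
          F.wX

/-- Morita equivalence of prequantizations: a compatible prequantization
`(Z → X, θ_Z)` of the equivalence bimodule `X` with respect to the
prequantization `((R_G × R̄_H)/S¹ → G × H̄ ⇉ G₀ × H̄₀,
(θ_G ⊖ θ_H) + (B_G ⊖ B_H))` of the product, written out explicitly:
commuting `R_G`- and `R_H`-actions on `Z` covering the bimodule actions,
`S¹`-(anti)equivariantly, with the graph and curvature conditions. -/
structure MoritaPreqData {O1 A1 R1 O2 A2 R2 Xb : Type} {G : GrpdOn O1 A1}
    {Hg : GrpdOn O2 A2} {PG : PQS C G} {PH : PQS C Hg}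
    {EG : CentExt G R1} {hRG : GrpdLaws EG.RG}
    {EH : CentExt Hg R2} {hRH : GrpdLaws EH.RG}
    (QG : Preq C PG EG hRG) (QH : Preq C PH EH hRH)
    (M : MoritaBimodule C PG PH Xb) (Z : Type) where
  pz : Z → Xb
  pz_surj : Function.Surjective pz
  zsmul : Circle → Z → Z
  zsmul_one : ∀ z, zsmul 1 z = z
  zsmul_mul : ∀ u v z, zsmul (u * v) z = zsmul u (zsmul v z)
  pz_zsmul : ∀ u z, pz (zsmul u z) = pz z
  zfree : ∀ u z, zsmul u z = z → u = 1
  zfib_trans : ∀ z z', pz z = pz z' → ∃ u, zsmul u z = z'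
  actG : ∀ (q : R1) (z : Z), EG.RG.s q = M.ρl.J (pz z) → Z
  pz_actG : ∀ q z h h', pz (actG q z h) = M.ρl.act (EG.π q) (pz z) h'
  actG_unit : ∀ z h, actG (EG.RG.unit (M.ρl.J (pz z))) z h = z
  actG_comp : ∀ q q' z hqq' h1 h2 h3,
    actG (EG.RG.comp q q' hqq') z h1 = actG q (actG q' z h2) h3
  actG_zsmul : ∀ u v q z h h',
    actG (EG.smul u q) (zsmul v z) h = zsmul (u * v) (actG q z h')
  actH : ∀ (q : R2) (z : Z), EH.RG.t q = M.σ (pz z) → Z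
  pz_actH : ∀ q z h h', pz (actH q z h) = M.ractH (EH.π q) (pz z) h'
  actH_unit : ∀ z h, actH (EH.RG.unit (M.σ (pz z))) z h = z
  actH_comp : ∀ q q' z hqq' h1 h2 h3,
    actH (EH.RG.comp q q' hqq') z h1 = actH q' (actH q z h2) h3
  actH_zsmul : ∀ u v q z h h',
    actH (EH.smul u q) (zsmul v z) h = zsmul (u⁻¹ * v) (actH q z h')
  actGH_comm : ∀ (q1 : R1) (q2 : R2) (z : Z) (hh : EH.RG.t q2 = M.σ (pz z))
    (hg : EG.RG.s q1 = M.ρl.J (pz (actH q2 z hh)))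
    (hg' : EG.RG.s q1 = M.ρl.J (pz z))
    (hh' : EH.RG.t q2 = M.σ (pz (actG q1 z hg'))),
    actG q1 (actH q2 z hh) hg = actH q2 (actG q1 z hg') hh'
  θZ : C.Form Z 1
  connZ : IsConnForm C zsmul θZ
  graphZ :
    C.pull (fun q : { u : R1 × R2 × Z // EG.RG.s u.1 = M.ρl.J (pz u.2.2)
        ∧ EH.RG.t u.2.1 = M.σ (pz u.2.2) } => q.val.1) QG.θ
      - C.pull (fun q : { u : R1 × R2 × Z // EG.RG.s u.1 = M.ρl.J (pz u.2.2)
          ∧ EH.RG.t u.2.1 = M.σ (pz u.2.2) } => q.val.2.1) QH.θ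
      + C.pull (fun q : { u : R1 × R2 × Z // EG.RG.s u.1 = M.ρl.J (pz u.2.2)
          ∧ EH.RG.t u.2.1 = M.σ (pz u.2.2) } => q.val.2.2) θZ
      - C.pull (fun q : { u : R1 × R2 × Z // EG.RG.s u.1 = M.ρl.J (pz u.2.2)
          ∧ EH.RG.t u.2.1 = M.σ (pz u.2.2) } =>
            actG q.val.1 (actH q.val.2.1 q.val.2.2 q.property.2)
              (q.property.1.trans
                (((congrArg M.ρl.J
                      (pz_actH q.val.2.1 q.val.2.2 q.property.2
                        ((EH.π_t _).trans q.property.2))).trans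
                    (M.J_ract _ _ _)).symm))) θZ
      = 0
  dθZ : C.d θZ
    = C.pull pz (C.pull M.ρl.J QG.B - C.pull M.σ QH.B - M.wXb)

/-- The diagonal action of `R_G` on `Z ×_{G₀} L` used in the construction of
the prequantization `L' = Z ×_{R_G} L̄` of the related Hamiltonian space. -/
def diagMoritaAction {O1 A1 R1 O2 A2 R2 Xb Xf Lf : Type} {G : GrpdOn O1 A1}
    {Hg : GrpdOn O2 A2} {PG : PQS C G} {PH : PQS C Hg}
    {EG : CentExt G R1} {hRG : GrpdLaws EG.RG}
    {EH : CentExt Hg R2} {hRH : GrpdLaws EH.RG}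
    {QG : Preq C PG EG hRG} {QH : Preq C PH EH hRH}
    {M : MoritaBimodule C PG PH Xb} {Z : Type} {F : PreHamOn C PG Xf}
    (MZ : MoritaPreqData C QG QH M Z) (cF : CompatPreq C QG F Lf) :
    ActionOn EG.RG { y : Z × Lf // M.ρl.J (MZ.pz y.1) = F.ρ.J (cF.φ y.2) } where
  J y := M.ρl.J (MZ.pz y.val.1)
  act q y h :=
    ⟨(MZ.actG q y.val.1 h, cF.lact q y.val.2 (h.trans y.property)),
      (((congrArg M.ρl.J (MZ.pz_actG q y.val.1 h ((EG.π_s q).trans h))).trans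
          (M.lawsl.J_act _ _ _)).trans
        (((congrArg F.ρ.J
              (cF.φ_lact q y.val.2 (h.trans y.property)
                ((EG.π_s q).trans (h.trans y.property)))).trans
            (F.laws.J_act _ _ _)).symm))⟩

theorem diagMoritaActionLaws {O1 A1 R1 O2 A2 R2 Xb Xf Lf : Type}
    {G : GrpdOn O1 A1} {Hg : GrpdOn O2 A2} {PG : PQS C G} {PH : PQS C Hg}
    {EG : CentExt G R1} {hRG : GrpdLaws EG.RG}
    {EH : CentExt Hg R2} {hRH : GrpdLaws EH.RG}
    {QG : Preq C PG EG hRG} {QH : Preq C PH EH hRH}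
    {M : MoritaBimodule C PG PH Xb} {Z : Type} {F : PreHamOn C PG Xf}
    (MZ : MoritaPreqData C QG QH M Z) (cF : CompatPreq C QG F Lf) :
    ActionLaws (diagMoritaAction C MZ cF) := by
  have key : ∀ (l : Lf) (u u' : R1) (hu : u = u')
      (hl : EG.RG.s u = F.ρ.J (cF.φ l)) (hl' : EG.RG.s u' = F.ρ.J (cF.φ l)),
      cF.lact u l hl = cF.lact u' l hl' := by
    intro l u u' hu hl hl'; subst hu; rfl
  constructor
  · intro q y h
    exact (congrArg M.ρl.J
      (MZ.pz_actG q y.val.1 h ((EG.π_s q).trans h))).trans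
      ((M.lawsl.J_act _ _ _).trans (EG.π_t q))
  · intro y h
    obtain ⟨⟨z, l⟩, hy⟩ := y
    refine Subtype.ext (Prod.ext (MZ.actG_unit z h) ?_)
    refine (key l _ _ (congrArg EG.RG.unit hy) _ ?_).trans (cF.lact_unit l _)
    exact (congrArg EG.RG.s (congrArg EG.RG.unit hy)).symm.trans (h.trans hy)
  · intro q q' y hhx hgh h1 h2
    refine Subtype.ext (Prod.ext ?_ ?_)
    · exact MZ.actG_comp q q' y.val.1 hgh _ _ _
    · exact cF.lact_comp q q' y.val.2 hgh _ _ _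

/-! ## Concrete groupoids -/

/-- The transformation groupoid `G × G ⇉ G` of the conjugation action (the
underlying groupoid of the AMM quasi-symplectic groupoid). -/
def conjGrpd (𝔾 : Type) [Group 𝔾] : GrpdOn 𝔾 (𝔾 × 𝔾) where
  s p := p.2
  t p := p.1 * p.2 * p.1⁻¹
  unit x := (1, x)
  comp g h _ := (g.1 * h.1, h.2)
  inv g := (g.1⁻¹, g.1 * g.2 * g.1⁻¹)

theorem conjGrpdLaws (𝔾 : Type) [Group 𝔾] : GrpdLaws (conjGrpd 𝔾) := by
  constructor
  · intro m; rfl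
  · intro m; show 1 * m * 1⁻¹ = m; group
  · intro g h hgh; rfl
  · intro g h hgh
    show (g.1 * h.1) * h.2 * (g.1 * h.1)⁻¹ = g.1 * g.2 * g.1⁻¹
    have hg : g.2 = h.1 * h.2 * h.1⁻¹ := hgh
    rw [hg]; group
  · intro g; rfl
  · intro g
    show g.1⁻¹ * (g.1 * g.2 * g.1⁻¹) * g.1⁻¹⁻¹ = g.2
    group
  · intro g m hm h
    show (g.1 * 1, m) = g
    rw [mul_one]; exact Prod.ext rfl hm.symm
  · intro g m hm h
    show (1 * g.1, g.2) = g
    rw [one_mul]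
  · intro g h
    show (g.1 * g.1⁻¹, g.1 * g.2 * g.1⁻¹) = (1, g.1 * g.2 * g.1⁻¹)
    rw [mul_inv_cancel]
  · intro g h
    show (g.1⁻¹ * g.1, g.2) = (1, g.2)
    rw [inv_mul_cancel]
  · intro g h k hgh hhk h1 h2
    show (g.1 * h.1 * k.1, k.2) = (g.1 * (h.1 * k.1), k.2)
    rw [mul_assoc]

/-- The transformation groupoid `G × X ⇉ X` of a group action. -/
def mulActGrpd (𝔾 X : Type) [Group 𝔾] [MulAction 𝔾 X] : GrpdOn X (𝔾 × X) where
  s p := p.2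
  t p := p.1 • p.2
  unit x := (1, x)
  comp g h _ := (g.1 * h.1, h.2)
  inv g := (g.1⁻¹, g.1 • g.2)

theorem mulActGrpdLaws (𝔾 X : Type) [Group 𝔾] [MulAction 𝔾 X] :
    GrpdLaws (mulActGrpd 𝔾 X) := by
  constructor
  · intro m; rfl
  · intro m; exact one_smul _ _
  · intro g h hgh; rfl
  · intro g h hgh
    show (g.1 * h.1) • h.2 = g.1 • g.2
    have hg : g.2 = h.1 • h.2 := hgh
    rw [mul_smul, ← hg]
  · intro g; rfl
  · intro g; exact inv_smul_smul _ _
  · intro g m hm h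
    show (g.1 * 1, m) = g
    rw [mul_one]; exact Prod.ext rfl hm.symm
  · intro g m hm h
    show (1 * g.1, g.2) = g
    rw [one_mul]
  · intro g h
    show (g.1 * g.1⁻¹, g.1 • g.2) = (1, g.1 • g.2)
    rw [mul_inv_cancel]
  · intro g h
    show (g.1⁻¹ * g.1, g.2) = (1, g.2)
    rw [inv_mul_cancel]
  · intro g h k hgh hhk h1 h2
    show (g.1 * h.1 * k.1, k.2) = (g.1 * (h.1 * k.1), k.2)
    rw [mul_assoc]

/-- A group action on a space, as a groupoid action of `G × X ⇉ X`...
actually the action of the transformation groupoid `G × X ⇉ X` on a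
`G`-equivariant map `J : Y → X` is not needed; instead we need actions on
spaces over the base.  For the AMM groupoid and `T^*G ⇉ 𝔤^*` we use
`PreHamOn` directly. -/
def grpActionOn (𝔾 X Y : Type) [Group 𝔾] [MulAction 𝔾 X] [MulAction 𝔾 Y]
    (J : Y → X) (hJ : ∀ (g : 𝔾) (y : Y), J (g • y) = g • J y) :
    ActionOn (mulActGrpd 𝔾 X) Y where
  J := J
  act g y _ := g.1 • y

/-! ## Pull-back groupoids -/

/-- The pull-back groupoid `Γ[N] ⇉ N` of `Γ ⇉ M` along `p : N → M`. -/
def pbGrpd {O A N : Type} (G : GrpdOn O A) (hG : GrpdLaws G) (p : N → O) :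
    GrpdOn N { q : N × A × N // G.t q.2.1 = p q.1 ∧ G.s q.2.1 = p q.2.2 } where
  s q := q.val.2.2
  t q := q.val.1
  unit n := ⟨(n, G.unit (p n), n), ⟨hG.t_unit _, hG.s_unit _⟩⟩
  comp q q' h :=
    ⟨(q.val.1,
        G.comp q.val.2.1 q'.val.2.1
          (q.property.2.trans ((congrArg p h).trans q'.property.1.symm)),
        q'.val.2.2),
      ⟨(hG.t_comp _ _ _).trans q.property.1, (hG.s_comp _ _ _).trans q'.property.2⟩⟩
  inv q :=
    ⟨(q.val.2.2, G.inv q.val.2.1, q.val.1),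
      ⟨(hG.t_inv _).trans q.property.2, (hG.s_inv _).trans q.property.1⟩⟩

theorem pbGrpdLaws {O A N : Type} (G : GrpdOn O A) (hG : GrpdLaws G)
    (p : N → O) : GrpdLaws (pbGrpd G hG p) := by
  constructor
  · intro m; rfl
  · intro m; rfl
  · intro g h hgh; rfl
  · intro g h hgh; rfl
  · intro g; rfl
  · intro g; rfl
  · intro q m hm h
    obtain ⟨⟨n1, a, n2⟩, hq1, hq2⟩ := q
    have hm' : n2 = m := hm
    subst hm'
    exact Subtype.ext
      (Prod.ext rfl (Prod.ext (hG.comp_unit a (p n2) hq2 _) rfl))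
  · intro q m hm h
    obtain ⟨⟨n1, a, n2⟩, hq1, hq2⟩ := q
    have hm' : n1 = m := hm
    subst hm'
    exact Subtype.ext
      (Prod.ext rfl (Prod.ext (hG.unit_comp a (p n1) hq1 _) rfl))
  · intro q h
    obtain ⟨⟨n1, a, n2⟩, hq1, hq2⟩ := q
    exact Subtype.ext (Prod.ext rfl
      (Prod.ext ((hG.comp_inv a _).trans (congrArg G.unit hq1)) rfl))
  · intro q h
    obtain ⟨⟨n1, a, n2⟩, hq1, hq2⟩ := q
    exact Subtype.ext (Prod.ext rfl
      (Prod.ext ((hG.inv_comp a _).trans (congrArg G.unit hq2)) rfl))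
  · intro g h k hgh hhk h1 h2
    exact Subtype.ext
      (Prod.ext rfl (Prod.ext (hG.assoc _ _ _ _ _ _ _) rfl))

/-- The pull-back `X_N = X ×_M N` of a `Γ`-space along `p : N → M`, as a
`Γ[N]`-space. -/
def pbAct {O A N X : Type} {G : GrpdOn O A} (hG : GrpdLaws G) (p : N → O)
    (r : ActionOn G X) (hr : ActionLaws r) :
    ActionOn (pbGrpd G hG p) { q : X × N // r.J q.1 = p q.2 } where
  J q := q.val.2
  act a q h :=
    ⟨(r.act a.val.2.1 q.val.1
        (a.property.2.trans ((congrArg p h).trans q.property.symm)), a.val.1),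
      (hr.J_act _ _ _).trans a.property.1⟩

theorem pbActLaws {O A N X : Type} {G : GrpdOn O A} (hG : GrpdLaws G)
    (p : N → O) (r : ActionOn G X) (hr : ActionLaws r) :
    ActionLaws (pbAct hG p r hr) := by
  constructor
  · intro a q h; rfl
  · intro q h
    obtain ⟨⟨x, n⟩, hq⟩ := q
    refine Subtype.ext (Prod.ext ?_ rfl)
    have e : G.unit (p n) = G.unit (r.J x) := congrArg G.unit hq.symm
    refine (r.act_congr e x _ ?_).trans (hr.act_unit x _)
    exact hG.s_unit _
  · intro a b q hhx hgh h1 h2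
    refine Subtype.ext (Prod.ext ?_ rfl)
    exact hr.act_comp a.val.2.1 b.val.2.1 q.val.1 _ _ _ _

end


namespace Stmt12Aux

variable {C : DiffCtxCore}

theorem pull_zero (hC : DiffCtxLaws C) {X Y : Type} (f : X → Y) {k : ℕ} :
    C.pull f (0 : C.Form Y k) = 0 := by
  have h := hC.pull_add f (0 : C.Form Y k) 0
  rw [add_zero] at h
  have h2 : C.pull f (0 : C.Form Y k) + 0
      = C.pull f (0 : C.Form Y k) + C.pull f (0 : C.Form Y k) := by
    rw [add_zero]; exact h
  exact (add_left_cancel h2).symm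

theorem pair_zero_right (hC : DiffCtxLaws C) {X : Type} {k : ℕ}
    (c : C.Chain X k) : C.pair c (0 : C.Form X k) = 0 := by
  have h := hC.pair_add_right c 0 0
  rw [add_zero] at h; linarith

theorem pair_zero_left (hC : DiffCtxLaws C) {X : Type} {k : ℕ}
    (w : C.Form X k) : C.pair (0 : C.Chain X k) w = 0 := by
  have h := hC.pair_add_left (0 : C.Chain X k) 0 w
  rw [add_zero] at h; linarith

theorem pair_neg_right (hC : DiffCtxLaws C) {X : Type} {k : ℕ}
    (c : C.Chain X k) (w : C.Form X k) : C.pair c (-w) = -C.pair c w := by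
  have h := hC.pair_add_right c w (-w)
  rw [add_neg_cancel, pair_zero_right hC] at h; linarith

theorem pair_neg_left (hC : DiffCtxLaws C) {X : Type} {k : ℕ}
    (c : C.Chain X k) (w : C.Form X k) : C.pair (-c) w = -C.pair c w := by
  have h := hC.pair_add_left c (-c) w
  rw [add_neg_cancel, pair_zero_left hC] at h; linarith

theorem pair_sub_right (hC : DiffCtxLaws C) {X : Type} {k : ℕ}
    (c : C.Chain X k) (w v : C.Form X k) :
    C.pair c (w - v) = C.pair c w - C.pair c v := by
  rw [sub_eq_add_neg, hC.pair_add_right, pair_neg_right hC]; ring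

theorem pair_sub_left (hC : DiffCtxLaws C) {X : Type} {k : ℕ}
    (c c' : C.Chain X k) (w : C.Form X k) :
    C.pair (c - c') w = C.pair c w - C.pair c' w := by
  rw [sub_eq_add_neg, hC.pair_add_left, pair_neg_left hC]; ring

theorem stokes (hC : DiffCtxLaws C) {O A : Type} {G : GrpdOn O A}
    (hG : GrpdLaws G) (c : Chn3 C G) (a : Coch2 C G) :
    pair3 C G c (delta23 C hG a) = pair2 C G (deltaC32 C hG c) a := by
  obtain ⟨c1, c2, c3, c4⟩ := c
  obtain ⟨a1, a2, a3⟩ := a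
  simp only [pair3, pair2, delta23, deltaC32, bO1, bA2, b23, cb10, cb21, cb32,
    hC.pair_add_left, hC.pair_add_right, pair_sub_left hC, pair_sub_right hC,
    pair_neg_left hC, hC.pair_bd, hC.pair_push]
  ring

theorem pair2_push (hC : DiffCtxLaws C) {O A O' A' : Type} {G : GrpdOn O A}
    {H : GrpdOn O' A'} (f : GrpdHom G H) (c : Chn2 C G) (a : Coch2 C H) :
    pair2 C H (pushChn2 C f c) a = pair2 C G c (pullCoch2 C f a) := by
  simp only [pair2, pushChn2, pullCoch2, hC.pair_push]

theorem pair3_push (hC : DiffCtxLaws C) {O A O' A' : Type} {G : GrpdOn O A}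
    {H : GrpdOn O' A'} (f : GrpdHom G H) (c : Chn3 C G) (a : Coch3 C H) :
    pair3 C H (pushChn3 C f c) a = pair3 C G c (pullCoch3 C f a) := by
  simp only [pair3, pushChn3, pullCoch3, hC.pair_push]

theorem pair2_sub_left (hC : DiffCtxLaws C) {O A : Type} (G : GrpdOn O A)
    (c c' : Chn2 C G) (a : Coch2 C G) :
    pair2 C G (c - c') a = pair2 C G c a - pair2 C G c' a := by
  simp only [pair2]
  have h1 : (c - c').1 = c.1 - c'.1 := rfl
  have h2 : (c - c').2.1 = c.2.1 - c'.2.1 := rfl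
  have h3 : (c - c').2.2 = c.2.2 - c'.2.2 := rfl
  rw [h1, h2, h3, pair_sub_left hC, pair_sub_left hC, pair_sub_left hC]; ring

theorem pair2_sub_right (hC : DiffCtxLaws C) {O A : Type} (G : GrpdOn O A)
    (c : Chn2 C G) (a b : Coch2 C G) :
    pair2 C G c (a - b) = pair2 C G c a - pair2 C G c b := by
  simp only [pair2]
  have h1 : (a - b).1 = a.1 - b.1 := rfl
  have h2 : (a - b).2.1 = a.2.1 - b.2.1 := rfl
  have h3 : (a - b).2.2 = a.2.2 - b.2.2 := rfl
  rw [h1, h2, h3, pair_sub_right hC, pair_sub_right hC, pair_sub_right hC]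
  ring

theorem pair2_zsmul (hC : DiffCtxLaws C) {O A : Type} (G : GrpdOn O A)
    (n : ℤ) (c : Chn2 C G) (a : Coch2 C G) :
    pair2 C G (n • c) a = n * pair2 C G c a := by
  simp only [pair2]
  have h1 : (n • c).1 = n • c.1 := rfl
  have h2 : (n • c).2.1 = n • c.2.1 := rfl
  have h3 : (n • c).2.2 = n • c.2.2 := rfl
  rw [h1, h2, h3, hC.pair_zsmul, hC.pair_zsmul, hC.pair_zsmul]; ring

end Stmt12Aux

/-- Lemma 5.5: if `C' ∈ Z₂((R ×_M X)_•, ℤ)` satisfies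
`J_*(C') = kZ + δD'`, then with `C = π_*(C')` and `D = π_*(D')` one has
`∫_C ω_X - ∫_D (ω + Ω) = k + ∫_{C'} (ω_X - J^*(θ + B))`. -/
theorem statement12 (C : DiffCtxCore) (hC : DiffCtxLaws C) {O A R X : Type}
    (G : GrpdOn O A) (hG : GrpdLaws G) (P : PQS C G)
    (hint : P.IsIntegral hG) (hex : P.IsExact)
    (E : CentExt G R) (hR : GrpdLaws E.RG) (Q : Preq C P E hR)
    (H : PreHamOn C P X) (m : O) (k : ℤ)
    (C' : Chn2 C (E.pullTrans H.ρ hR H.laws)) (D' : Chn3 C E.RG)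
    (hcyc : deltaC21 C (E.pullTrans H.ρ hR H.laws) C' = 0)
    (hrel : pushChn2 C (E.JHom hR H.laws) C'
      = k • E.Zm C m + deltaC32 C hR D') :
    pair2 C (H.ρ.trans hG H.laws)
        (pushChn2 C (E.piXHom hG hR H.laws) C') (H.wX, 0, 0)
      - pair3 C G (pushChn3 C E.πHom D') (P.W, P.w, 0, 0)
      = (k : ℝ)
        + pair2 C (E.pullTrans H.ρ hR H.laws) C'
            (((H.wX, 0, 0) : Coch2 C (E.pullTrans H.ρ hR H.laws))
              - pullCoch2 C (E.JHom hR H.laws)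
                  ((Q.B, Q.θ, 0) : Coch2 C E.RG)) := by
  classical
  have h1 : pair2 C (H.ρ.trans hG H.laws)
      (pushChn2 C (E.piXHom hG hR H.laws) C') (H.wX, 0, 0)
      = pair2 C (E.pullTrans H.ρ hR H.laws) C'
          ((H.wX, 0, 0) : Coch2 C (E.pullTrans H.ρ hR H.laws)) := by
    rw [Stmt12Aux.pair2_push hC]
    congr 1
    show (C.pull (fun x => x) H.wX, C.pull _ (0 : C.Form _ 1),
      C.pull _ (0 : C.Form _ 0)) = (H.wX, 0, 0)
    rw [hC.pull_id, Stmt12Aux.pull_zero hC, Stmt12Aux.pull_zero hC]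
  have hdel : deltaC32 C hR D'
      = pushChn2 C (E.JHom hR H.laws) C' - k • E.Zm C m := by
    rw [hrel]; abel
  have hZm : pair2 C E.RG (E.Zm C m) ((Q.B, Q.θ, 0) : Coch2 C E.RG) = 1 := by
    show C.pair 0 Q.B + C.pair (C.push (E.fib m) C.circleCycle) Q.θ
        + C.pair 0 (0 : C.Form _ 0) = 1
    rw [Stmt12Aux.pair_zero_left hC, Stmt12Aux.pair_zero_left hC, hC.pair_push]
    have hconn : C.pull (E.fib m) Q.θ = C.circleForm := Q.conn (E.RG.unit m)
    rw [hconn, hC.pair_circle]; ring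
  have h2 : pair3 C G (pushChn3 C E.πHom D') (P.W, P.w, 0, 0)
      = pair2 C (E.pullTrans H.ρ hR H.laws) C'
          (pullCoch2 C (E.JHom hR H.laws) ((Q.B, Q.θ, 0) : Coch2 C E.RG))
        - (k : ℝ) := by
    rw [Stmt12Aux.pair3_push hC, ← Q.curv, Stmt12Aux.stokes hC, hdel,
      Stmt12Aux.pair2_sub_left hC, Stmt12Aux.pair2_zsmul hC, hZm,
      Stmt12Aux.pair2_push hC]
    ring
  rw [h1, h2, Stmt12Aux.pair2_sub_right hC]
  ring
end

section
/- Let (Γ ⇉ M, ω + Ω) be a pre-quasi-symplectic groupoid, (X →^J M, ω_X) a pre-Hamiltonian Γ-space, and p: N → M a surjective submersion. Let Γ[N] ⇉ N be the pull-back groupoid, X_N = X ×_M N with the induced pre-Hamiltonian Γ[N]-space structure (J_N: X_N → N, p*ω_X). Then the pair (ω_X, ω + Ω) satisfies the integrality condition if and only if the pair (p*ω_X, p*ω + p*Ω) satisfies the integrality condition. -/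
section Statement18Aux

variable {C : DiffCtxCore}

private lemma push_zero' (hC : DiffCtxLaws C) {X Y : Type} (f : X → Y) {k : ℕ} :
    C.push f (0 : C.Chain X k) = 0 :=
  (AddMonoidHom.mk' (C.push f) (hC.push_add f)).map_zero

private lemma push_add' (hC : DiffCtxLaws C) {X Y : Type} (f : X → Y) {k : ℕ}
    (a b : C.Chain X k) : C.push f (a + b) = C.push f a + C.push f b :=
  hC.push_add f a b

private lemma push_sub' (hC : DiffCtxLaws C) {X Y : Type} (f : X → Y) {k : ℕ}
    (a b : C.Chain X k) : C.push f (a - b) = C.push f a - C.push f b :=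
  (AddMonoidHom.mk' (C.push f) (hC.push_add f)).map_sub a b

private lemma push_neg' (hC : DiffCtxLaws C) {X Y : Type} (f : X → Y) {k : ℕ}
    (a : C.Chain X k) : C.push f (-a) = -C.push f a :=
  (AddMonoidHom.mk' (C.push f) (hC.push_add f)).map_neg a

private lemma pair_zero' (hC : DiffCtxLaws C) {X : Type} {k : ℕ}
    (c : C.Chain X k) : C.pair c (0 : C.Form X k) = 0 :=
  (AddMonoidHom.mk' (C.pair c) (hC.pair_add_right c)).map_zero

private lemma push_push (hC : DiffCtxLaws C) {X Y Z W : Type} (f : X → Y)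
    (g : Y → Z) (f' : X → W) (g' : W → Z) (h : ∀ x, g (f x) = g' (f' x))
    {k : ℕ} (c : C.Chain X k) :
    C.push g (C.push f c) = C.push g' (C.push f' c) := by
  rw [← hC.push_comp f g, ← hC.push_comp f' g']
  exact congrArg (fun fn : X → Z => C.push fn c) (funext h)

private lemma cb10_push (hC : DiffCtxLaws C) {O A O' A' : Type}
    {G : GrpdOn O A} {G' : GrpdOn O' A'} (f : GrpdHom G G') {k : ℕ}
    (c : C.Chain A k) :
    cb10 C G' (C.push f.fa c) = C.push f.fo (cb10 C G c) := by
  unfold cb10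
  rw [push_sub' hC]
  exact congrArg₂ (· - ·) (push_push hC f.fa G'.s G.s f.fo f.map_s c)
    (push_push hC f.fa G'.t G.t f.fo f.map_t c)

private lemma cb21_push (hC : DiffCtxLaws C) {O A O' A' : Type}
    {G : GrpdOn O A} {G' : GrpdOn O' A'} (f : GrpdHom G G') {k : ℕ}
    (c : C.Chain G.C2 k) :
    cb21 C G' (C.push f.c2 c) = C.push f.fa (cb21 C G c) := by
  unfold cb21
  rw [push_add' hC, push_sub' hC]
  refine congrArg₂ (· + ·) (congrArg₂ (· - ·) ?_ ?_) ?_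
  · exact push_push hC f.c2 G'.f20 G.f20 f.fa (fun q => rfl) c
  · exact push_push hC f.c2 G'.m2 G.m2 f.fa
      (fun q => (f.map_comp q.val.1 q.val.2 q.property _).symm) c
  · exact push_push hC f.c2 G'.f22 G.f22 f.fa (fun q => rfl) c

private lemma cb32_push (hC : DiffCtxLaws C) {O A O' A' : Type}
    {G : GrpdOn O A} {G' : GrpdOn O' A'} (hG : GrpdLaws G) (hG' : GrpdLaws G')
    (f : GrpdHom G G') {k : ℕ} (c : C.Chain G.C3 k) :
    cb32 C hG' (C.push f.c3 c) = C.push f.c2 (cb32 C hG c) := by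
  unfold cb32
  rw [push_sub' hC, push_add' hC, push_sub' hC]
  refine congrArg₂ (· - ·) (congrArg₂ (· + ·) (congrArg₂ (· - ·) ?_ ?_) ?_) ?_
  · exact push_push hC f.c3 GrpdOn.f30 GrpdOn.f30 f.c2
      (fun q => Subtype.ext rfl) c
  · exact push_push hC f.c3 (GrpdOn.f31 hG') (GrpdOn.f31 hG) f.c2
      (fun q => Subtype.ext (Prod.ext
        (f.map_comp q.val.1 q.val.2.1 q.property.1 _).symm rfl)) c
  · exact push_push hC f.c3 (GrpdOn.f32 hG') (GrpdOn.f32 hG) f.c2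
      (fun q => Subtype.ext (Prod.ext rfl
        (f.map_comp q.val.2.1 q.val.2.2 q.property.2 _).symm)) c
  · exact push_push hC f.c3 GrpdOn.f33 GrpdOn.f33 f.c2
      (fun q => Subtype.ext rfl) c

private lemma deltaC21_pushChn2 (hC : DiffCtxLaws C) {O A O' A' : Type}
    {G : GrpdOn O A} {G' : GrpdOn O' A'} (f : GrpdHom G G') (c : Chn2 C G) :
    deltaC21 C G' (pushChn2 C f c)
      = (C.push f.fo (deltaC21 C G c).1, C.push f.fa (deltaC21 C G c).2) := by
  unfold deltaC21 pushChn2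
  refine Prod.ext ?_ ?_
  · show C.bd (C.push f.fo c.1) + cb10 C G' (C.push f.fa c.2.1)
      = C.push f.fo (C.bd c.1 + cb10 C G c.2.1)
    rw [push_add' hC, hC.push_bd, cb10_push hC]
  · show -C.bd (C.push f.fa c.2.1) + cb21 C G' (C.push f.c2 c.2.2)
      = C.push f.fa (-C.bd c.2.1 + cb21 C G c.2.2)
    rw [push_add' hC, push_neg' hC, hC.push_bd, cb21_push hC]

private lemma deltaC32_pushChn3 (hC : DiffCtxLaws C) {O A O' A' : Type}
    {G : GrpdOn O A} {G' : GrpdOn O' A'} (hG : GrpdLaws G) (hG' : GrpdLaws G')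
    (f : GrpdHom G G') (c : Chn3 C G) :
    deltaC32 C hG' (pushChn3 C f c) = pushChn2 C f (deltaC32 C hG c) := by
  unfold deltaC32 pushChn3 pushChn2
  refine Prod.ext ?_ (Prod.ext ?_ ?_)
  · show C.bd (C.push f.fo c.1) + cb10 C G' (C.push f.fa c.2.1)
      = C.push f.fo (C.bd c.1 + cb10 C G c.2.1)
    rw [push_add' hC, hC.push_bd, cb10_push hC]
  · show -C.bd (C.push f.fa c.2.1) + cb21 C G' (C.push f.c2 c.2.2.1)
      = C.push f.fa (-C.bd c.2.1 + cb21 C G c.2.2.1)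
    rw [push_add' hC, push_neg' hC, hC.push_bd, cb21_push hC]
  · show C.bd (C.push f.c2 c.2.2.1) + cb32 C hG' (C.push f.c3 c.2.2.2)
      = C.push f.c2 (C.bd c.2.2.1 + cb32 C hG c.2.2.2)
    rw [push_add' hC, hC.push_bd, cb32_push hC hG hG']

private lemma push2_sq (hC : DiffCtxLaws C)
    {O1 A1 O2 A2 O3 A3 O4 A4 : Type}
    {G1 : GrpdOn O1 A1} {G2 : GrpdOn O2 A2} {G3 : GrpdOn O3 A3}
    {G4 : GrpdOn O4 A4}
    (f : GrpdHom G1 G2) (g : GrpdHom G2 G4) (f' : GrpdHom G1 G3)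
    (g' : GrpdHom G3 G4)
    (ho : ∀ x, g.fo (f.fo x) = g'.fo (f'.fo x))
    (ha : ∀ x, g.fa (f.fa x) = g'.fa (f'.fa x)) (c : Chn2 C G1) :
    pushChn2 C g (pushChn2 C f c) = pushChn2 C g' (pushChn2 C f' c) := by
  unfold pushChn2
  refine Prod.ext (push_push hC _ _ _ _ ho c.1)
    (Prod.ext (push_push hC _ _ _ _ ha c.2.1)
      (push_push hC _ _ _ _ ?_ c.2.2))
  intro q
  exact Subtype.ext (Prod.ext (ha _) (ha _))

/-- General transfer of the integrality condition along a pair of groupoid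
homomorphisms forming a commuting square with the moment projections and
pulling the data back correctly. -/
private theorem integrality_transfer (hC : DiffCtxLaws C)
    {O A X O' A' X' : Type}
    {G : GrpdOn O A} (hG : GrpdLaws G) {G' : GrpdOn O' A'} (hG' : GrpdLaws G')
    (w : C.Form A 2) (W : C.Form O 3) (r : ActionOn G X) (hr : ActionLaws r)
    (wX : C.Form X 2)
    (w' : C.Form A' 2) (W' : C.Form O' 3) (r' : ActionOn G' X')
    (hr' : ActionLaws r') (wX' : C.Form X' 2)
    (F : GrpdHom G G') (Ft : GrpdHom (r.trans hG hr) (r'.trans hG' hr'))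
    (hsq_o : ∀ x : X, r'.J (Ft.fo x) = F.fo (r.J x))
    (hsq_a : ∀ q : r.Mor, (Ft.fa q).val.1 = F.fa q.val.1)
    (hwX : C.pull Ft.fo wX' = wX) (hW : C.pull F.fo W' = W)
    (hw : C.pull F.fa w' = w)
    (hint : IntegralityCondition C G' hG' w' W' r' hr' wX') :
    IntegralityCondition C G hG w W r hr wX := by
  intro Cc D h1 h2
  have hz : deltaC21 C (r'.trans hG' hr') (pushChn2 C Ft Cc) = 0 := by
    rw [deltaC21_pushChn2 hC Ft Cc, h1]
    refine Prod.ext ?_ ?_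
    · show C.push Ft.fo (0 : Chn1 C (r.trans hG hr)).1 = 0
      exact push_zero' hC Ft.fo
    · show C.push Ft.fa (0 : Chn1 C (r.trans hG hr)).2 = 0
      exact push_zero' hC Ft.fa
  have hsq2 : pushChn2 C (r'.proj hG' hr') (pushChn2 C Ft Cc)
      = deltaC32 C hG' (pushChn3 C F D) := by
    have sq : pushChn2 C (r'.proj hG' hr') (pushChn2 C Ft Cc)
        = pushChn2 C F (pushChn2 C (r.proj hG hr) Cc) :=
      push2_sq hC Ft (r'.proj hG' hr') (r.proj hG hr) F hsq_o hsq_a Cc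
    rw [sq, h2, deltaC32_pushChn3 hC hG hG' F D]
  obtain ⟨n, hn⟩ := hint (pushChn2 C Ft Cc) (pushChn3 C F D) hz hsq2
  · refine ⟨n, ?_⟩
    have e2 : pair2 C (r'.trans hG' hr') (pushChn2 C Ft Cc) (wX', 0, 0)
        = pair2 C (r.trans hG hr) Cc (wX, 0, 0) := by
      unfold pair2 pushChn2
      rw [pair_zero' hC, pair_zero' hC, pair_zero' hC, pair_zero' hC,
        hC.pair_push, hwX]
    have e3 : pair3 C G' (pushChn3 C F D) (W', w', 0, 0)
        = pair3 C G D (W, w, 0, 0) := by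
      unfold pair3 pushChn3
      rw [pair_zero' hC, pair_zero' hC, pair_zero' hC, pair_zero' hC,
        hC.pair_push, hC.pair_push, hW, hw]
    rw [e2, e3] at hn
    exact hn

/-- The projection homomorphism `Γ[N] → Γ`. -/
private def pbProjHom {O A N : Type} (G : GrpdOn O A) (hG : GrpdLaws G)
    (p : N → O) : GrpdHom (pbGrpd G hG p) G where
  fo := p
  fa q := q.val.2.1
  map_s q := q.property.2
  map_t q := q.property.1
  map_unit n := rfl
  map_comp q q' h h' := rfl

/-- The projection homomorphism on transformation groupoids
`Γ[N] ⋉ X_N → Γ ⋉ X`. -/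
private def pbTransHom {O A N X : Type} {G : GrpdOn O A} (hG : GrpdLaws G)
    (p : N → O) (r : ActionOn G X) (hr : ActionLaws r) :
    GrpdHom ((pbAct hG p r hr).trans (pbGrpdLaws G hG p) (pbActLaws hG p r hr))
      (r.trans hG hr) where
  fo q := q.val.1
  fa u := ⟨(u.val.1.val.2.1, u.val.2.val.1),
    u.val.1.property.2.trans
      ((congrArg p u.property).trans u.val.2.property.symm)⟩
  map_s u := rfl
  map_t u := rfl
  map_unit x := Subtype.ext (Prod.ext (congrArg G.unit x.property.symm) rfl)
  map_comp u u' h h' := rfl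

/-- A set-theoretic section of `p` lifts to a homomorphism `Γ → Γ[N]`. -/
private def secLiftHom {O A N : Type} (G : GrpdOn O A) (hG : GrpdLaws G)
    (p : N → O) (sec : O → N) (hsec : ∀ m, p (sec m) = m) :
    GrpdHom G (pbGrpd G hG p) where
  fo := sec
  fa g := ⟨(sec (G.t g), g, sec (G.s g)), ⟨(hsec _).symm, (hsec _).symm⟩⟩
  map_s g := rfl
  map_t g := rfl
  map_unit m := Subtype.ext (Prod.ext (congrArg sec (hG.t_unit m))
    (Prod.ext (congrArg G.unit (hsec m).symm) (congrArg sec (hG.s_unit m))))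
  map_comp g h hgh h' := Subtype.ext (Prod.ext (congrArg sec (hG.t_comp g h hgh))
    (Prod.ext rfl (congrArg sec (hG.s_comp g h hgh))))

/-- The section lift on transformation groupoids `Γ ⋉ X → Γ[N] ⋉ X_N`. -/
private def secTransHom {O A N X : Type} {G : GrpdOn O A} (hG : GrpdLaws G)
    (p : N → O) (r : ActionOn G X) (hr : ActionLaws r) (sec : O → N)
    (hsec : ∀ m, p (sec m) = m) :
    GrpdHom (r.trans hG hr)
      ((pbAct hG p r hr).trans (pbGrpdLaws G hG p)
        (pbActLaws hG p r hr)) where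
  fo x := ⟨(x, sec (r.J x)), (hsec _).symm⟩
  fa q := ⟨((secLiftHom G hG p sec hsec).fa q.val.1,
      ⟨(q.val.2, sec (r.J q.val.2)), (hsec _).symm⟩),
    congrArg sec q.property⟩
  map_s q := rfl
  map_t q := Subtype.ext (Prod.ext rfl
    (congrArg sec (hr.J_act q.val.1 q.val.2 q.property)).symm)
  map_unit x := Subtype.ext
    (Prod.ext ((secLiftHom G hG p sec hsec).map_unit (r.J x)) rfl)
  map_comp q q' hqq' h' := Subtype.ext
    (Prod.ext ((secLiftHom G hG p sec hsec).map_comp q.val.1 q'.val.1 _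
      (congrArg sec (q.property.trans ((congrArg r.J hqq').trans
        (hr.J_act q'.val.1 q'.val.2 q'.property))))) rfl)

end Statement18Aux

/-- Lemma 5.12: for a surjective submersion `p : N → M`,
the pair `(ω_X, ω + Ω)` satisfies the integrality condition if and only if the
pulled back pair `(p^*ω_X, p^*ω + p^*Ω)` over the pull-back groupoid
`Γ[N] ⇉ N` does. -/
theorem statement18 (C : DiffCtxCore) (hC : DiffCtxLaws C) {O A N X : Type}
    (G : GrpdOn O A) (hG : GrpdLaws G) (P : PQS C G) (H : PreHamOn C P X)
    (p : N → O) (hp : Function.Surjective p) :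
    IntegralityCondition C G hG P.w P.W H.ρ H.laws H.wX ↔
      IntegralityCondition C (pbGrpd G hG p) (pbGrpdLaws G hG p)
        (C.pull
          (fun q : { q : N × A × N // G.t q.2.1 = p q.1 ∧ G.s q.2.1 = p q.2.2 }
            => q.val.2.1) P.w)
        (C.pull p P.W)
        (pbAct hG p H.ρ H.laws) (pbActLaws hG p H.ρ H.laws)
        (C.pull (fun q : { q : X × N // H.ρ.J q.1 = p q.2 } => q.val.1)
          H.wX) := by
  constructor
  · intro h
    exact integrality_transfer hC (pbGrpdLaws G hG p) hG _ _ _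
      (pbActLaws hG p H.ρ H.laws) _ P.w P.W H.ρ H.laws H.wX
      (pbProjHom G hG p) (pbTransHom hG p H.ρ H.laws)
      (fun xn => xn.property) (fun q => rfl) rfl rfl rfl h
  · intro h
    obtain ⟨sec, hsec⟩ : ∃ sec : O → N, ∀ m, p (sec m) = m :=
      ⟨Function.surjInv hp, fun m => Function.surjInv_eq hp m⟩
    refine integrality_transfer hC hG (pbGrpdLaws G hG p) P.w P.W H.ρ H.laws
      H.wX _ _ _ (pbActLaws hG p H.ρ H.laws) _
      (secLiftHom G hG p sec hsec) (secTransHom hG p H.ρ H.laws sec hsec)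
      (fun x => rfl) (fun q => rfl) ?_ ?_ ?_ h
    · rw [← hC.pull_comp]; exact hC.pull_id _
    · rw [← hC.pull_comp]
      exact (congrArg (fun fn : O → O => C.pull fn P.W) (funext hsec)).trans
        (hC.pull_id P.W)
    · rw [← hC.pull_comp]; exact hC.pull_id _
end
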